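/- arXiv:2308.15648 — 6 statements merged into one kernel-verified Lean document; each statement's English description precedes it below -/
import Mathlib

section
/- Let ρ be a 2^n × 2^n complex matrix with Tr(ρ) = 1, let (M_k)_{k=1}^{D} be 2^n × 2^n complex matrices with Σ_{k=1}^{D} M_k = I, let A be a D × D real matrix, and let α ≠ 0 be real. Define A'_{k k'} = α A_{k k'} + (1 − α) 2^{−n} Σ_{j=1}^{D} A_{k j} Tr(M_j) and ρ' = ρ/α + (1 − 1/α) 2^{−n} I. Then for every 2^n × 2^n unitary matrix U and every k ∈ {1,…,D}: Σ_{k'=1}^{D} A'_{k k'} Tr(U ρ' U† M_{k'}) = Σ_{k'=1}^{D} A_{k k'} Tr(U ρ U† M_{k'}). In other words, the gauge transformation leaves all noisy measurement probabilities invariant. -/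
open Matrix

/-- **The gauge transformation leaves all noisy measurement probabilities invariant.** -/
theorem stmt_2 (n D : ℕ)
    (ρ : Matrix (Fin (2 ^ n)) (Fin (2 ^ n)) ℂ) (hρtr : ρ.trace = 1)
    (M : Fin D → Matrix (Fin (2 ^ n)) (Fin (2 ^ n)) ℂ) (hMsum : ∑ k, M k = 1)
    (A : Matrix (Fin D) (Fin D) ℝ) (α : ℝ) (hα : α ≠ 0)
    (A' : Matrix (Fin D) (Fin D) ℂ)
    (hA' : ∀ k k', A' k k'
      = (α : ℂ) * A k k' + (1 - α) * ((2 : ℂ) ^ n)⁻¹ * ∑ j, (A k j : ℂ) * (M j).trace)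
    (ρ' : Matrix (Fin (2 ^ n)) (Fin (2 ^ n)) ℂ)
    (hρ' : ρ' = ((α : ℂ))⁻¹ • ρ + ((1 - ((α : ℂ))⁻¹) * ((2 : ℂ) ^ n)⁻¹) • 1) :
    ∀ U ∈ Matrix.unitaryGroup (Fin (2 ^ n)) ℂ, ∀ k : Fin D,
      ∑ k', A' k k' * (U * ρ' * Uᴴ * M k').trace
        = ∑ k', (A k k' : ℂ) * (U * ρ * Uᴴ * M k').trace := by
  intro U hU k
  have hαc : (α : ℂ) ≠ 0 := Complex.ofReal_ne_zero.mpr hα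
  have h2 : ((2 : ℂ) ^ n) ≠ 0 := pow_ne_zero n two_ne_zero
  have hUU : U * Uᴴ = 1 := by
    simpa [Matrix.star_eq_conjTranspose] using (Matrix.mem_unitaryGroup_iff.mp hU)
  have hUU' : Uᴴ * U = 1 := by
    simpa [Matrix.star_eq_conjTranspose] using (Matrix.mem_unitaryGroup_iff'.mp hU)
  set t : Fin D → ℂ := fun k' => (U * ρ * Uᴴ * M k').trace with ht
  set m : Fin D → ℂ := fun k' => (M k').trace with hm
  set S : ℂ := ∑ j, (A k j : ℂ) * m j with hS
  have key : ∀ B : Matrix (Fin (2 ^ n)) (Fin (2 ^ n)) ℂ,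
      (U * ρ' * Uᴴ * B).trace
        = (α : ℂ)⁻¹ * (U * ρ * Uᴴ * B).trace
          + (1 - (α : ℂ)⁻¹) * ((2 : ℂ) ^ n)⁻¹ * B.trace := by
    intro B
    rw [hρ']
    simp [Matrix.mul_add, Matrix.add_mul, Matrix.mul_smul, Matrix.smul_mul, hUU,
      trace_smul, smul_eq_mul, mul_assoc]
  have htsum : ∑ k', t k' = 1 := by
    have : ∑ k', t k' = ((U * ρ * Uᴴ) * ∑ k', M k').trace := by
      rw [Matrix.mul_sum, trace_sum]
    rw [this, hMsum, mul_one, Matrix.trace_mul_cycle, hUU', Matrix.one_mul, hρtr]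
  have hmsum : ∑ k', m k' = (2 : ℂ) ^ n := by
    have : ∑ k', m k' = (∑ k', M k').trace := by rw [trace_sum]
    rw [this, hMsum, trace_one]
    simp
  have step : ∀ k', A' k k' * (U * ρ' * Uᴴ * M k').trace
      = (A k k' : ℂ) * t k'
        + ((α : ℂ) * ((1 - (α : ℂ)⁻¹) * ((2 : ℂ) ^ n)⁻¹)) * ((A k k' : ℂ) * m k')
        + ((1 - (α : ℂ)) * ((2 : ℂ) ^ n)⁻¹ * (α : ℂ)⁻¹ * S) * t k'
        + ((1 - (α : ℂ)) * ((2 : ℂ) ^ n)⁻¹ * ((1 - (α : ℂ)⁻¹) * ((2 : ℂ) ^ n)⁻¹) * S)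
            * m k' := by
    intro k'
    rw [hA', key]
    field_simp
    ring
  calc ∑ k', A' k k' * (U * ρ' * Uᴴ * M k').trace
      = ∑ k', ((A k k' : ℂ) * t k'
        + ((α : ℂ) * ((1 - (α : ℂ)⁻¹) * ((2 : ℂ) ^ n)⁻¹)) * ((A k k' : ℂ) * m k')
        + ((1 - (α : ℂ)) * ((2 : ℂ) ^ n)⁻¹ * (α : ℂ)⁻¹ * S) * t k'
        + ((1 - (α : ℂ)) * ((2 : ℂ) ^ n)⁻¹ * ((1 - (α : ℂ)⁻¹) * ((2 : ℂ) ^ n)⁻¹) * S)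
            * m k') := Finset.sum_congr rfl fun k' _ => step k'
    _ = (∑ k', (A k k' : ℂ) * t k')
        + ((α : ℂ) * ((1 - (α : ℂ)⁻¹) * ((2 : ℂ) ^ n)⁻¹)) * S
        + ((1 - (α : ℂ)) * ((2 : ℂ) ^ n)⁻¹ * (α : ℂ)⁻¹ * S) * (∑ k', t k')
        + ((1 - (α : ℂ)) * ((2 : ℂ) ^ n)⁻¹ * ((1 - (α : ℂ)⁻¹) * ((2 : ℂ) ^ n)⁻¹) * S)
            * (∑ k', m k') := by
        simp [Finset.sum_add_distrib, Finset.mul_sum, hS]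
    _ = ∑ k', (A k k' : ℂ) * t k' := by
        rw [htsum, hmsum]
        field_simp
        ring
end

section
/- Let (M¹_k)_{k=1}^{D₁} be a D₁-outcome POVM on n₁ qubits and (M²_l)_{l=1}^{D₂} a D₂-outcome POVM on n₂ qubits, and set n = n₁ + n₂. Let A¹, A'¹ be D₁ × D₁ stochastic matrices and A², A'² be D₂ × D₂ stochastic matrices, none of which is the erasure channel. Set A = A¹ ⊗ A² and A' = A'¹ ⊗ A'² (Kronecker products, with rows and columns indexed by pairs (k,l)), and define d_{(k,l)} = 2^{−n} Σ_{(k',l')} A_{(k,l),(k',l')} Tr(M¹_{k'}) Tr(M²_{l'}). If there exists a real number α such that A'_{(k,l),(k',l')} = α A_{(k,l),(k',l')} + (1 − α) d_{(k,l)} for all indices (k,l), (k',l'), then A' = A. -/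
open Matrix ComplexOrder Kronecker

/-- **Uniqueness for block-independent noise.** If two block-independent (Kronecker
product) stochastic noise matrices, none of whose factors is the erasure channel,
are related by the gauge transformation, then they are equal. -/
theorem stmt_3 (n₁ n₂ D₁ D₂ : ℕ)
    (M₁ : Fin D₁ → Matrix (Fin (2 ^ n₁)) (Fin (2 ^ n₁)) ℂ)
    (hM₁ : ∀ k, (M₁ k).PosSemidef) (hM₁sum : ∑ k, M₁ k = 1)
    (M₂ : Fin D₂ → Matrix (Fin (2 ^ n₂)) (Fin (2 ^ n₂)) ℂ)
    (hM₂ : ∀ l, (M₂ l).PosSemidef) (hM₂sum : ∑ l, M₂ l = 1)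
    (A₁ B₁ : Matrix (Fin D₁) (Fin D₁) ℝ) (A₂ B₂ : Matrix (Fin D₂) (Fin D₂) ℝ)
    (hA₁ : ∀ k k', 0 ≤ A₁ k k') (hA₁col : ∀ k', ∑ k, A₁ k k' = 1)
    (hB₁ : ∀ k k', 0 ≤ B₁ k k') (hB₁col : ∀ k', ∑ k, B₁ k k' = 1)
    (hA₂ : ∀ l l', 0 ≤ A₂ l l') (hA₂col : ∀ l', ∑ l, A₂ l l' = 1)
    (hB₂ : ∀ l l', 0 ≤ B₂ l l') (hB₂col : ∀ l', ∑ l, B₂ l l' = 1)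
    (hA₁er : ¬ ∀ k i j, A₁ k i = A₁ k j) (hB₁er : ¬ ∀ k i j, B₁ k i = B₁ k j)
    (hA₂er : ¬ ∀ l i j, A₂ l i = A₂ l j) (hB₂er : ¬ ∀ l i j, B₂ l i = B₂ l j)
    (d : Fin D₁ × Fin D₂ → ℝ)
    (hd : ∀ kl, d kl = ((2 : ℝ) ^ (n₁ + n₂))⁻¹ *
      ∑ kl' : Fin D₁ × Fin D₂,
        (A₁ ⊗ₖ A₂) kl kl' * ((M₁ kl'.1).trace.re * (M₂ kl'.2).trace.re))
    (hgauge : ∃ α : ℝ, ∀ (kl kl' : Fin D₁ × Fin D₂),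
      (B₁ ⊗ₖ B₂) kl kl' = α * (A₁ ⊗ₖ A₂) kl kl' + (1 - α) * d kl) :
    B₁ ⊗ₖ B₂ = A₁ ⊗ₖ A₂ := by
  obtain ⟨α, hα⟩ := hgauge
  simp only [kroneckerMap_apply] at hα
  push_neg at hB₁er hB₂er
  obtain ⟨k₀, i₀, j₀, hx⟩ := hB₁er
  obtain ⟨l₀, a₀, b₀, hy⟩ := hB₂er
  -- first differences in the first factor
  have hdiff1 : ∀ (k i j : Fin D₁) (l l' : Fin D₂),
      (B₁ k i - B₁ k j) * B₂ l l' = α * ((A₁ k i - A₁ k j) * A₂ l l') := by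
    intro k i j l l'
    linear_combination hα (k, l) (i, l') - hα (k, l) (j, l')
  -- first differences in the second factor
  have hdiff2 : ∀ (k k' : Fin D₁) (l a b : Fin D₂),
      B₁ k k' * (B₂ l a - B₂ l b) = α * (A₁ k k' * (A₂ l a - A₂ l b)) := by
    intro k k' l a b
    linear_combination hα (k, l) (k', a) - hα (k, l) (k', b)
  have hD1 : ∀ (k i j : Fin D₁), B₁ k i - B₁ k j = α * (A₁ k i - A₁ k j) := by
    intro k i j
    have hs : ∑ l, (B₁ k i - B₁ k j) * B₂ l a₀
        = ∑ l, α * ((A₁ k i - A₁ k j) * A₂ l a₀) :=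
      Finset.sum_congr rfl fun l _ => hdiff1 k i j l a₀
    rw [← Finset.mul_sum, ← Finset.mul_sum, ← Finset.mul_sum, hB₂col a₀, hA₂col a₀] at hs
    simpa using hs
  have hD2 : ∀ (l a b : Fin D₂), B₂ l a - B₂ l b = α * (A₂ l a - A₂ l b) := by
    intro l a b
    have hs : ∑ k, B₁ k i₀ * (B₂ l a - B₂ l b)
        = ∑ k, α * (A₁ k i₀ * (A₂ l a - A₂ l b)) :=
      Finset.sum_congr rfl fun k _ => hdiff2 k i₀ l a b
    rw [← Finset.sum_mul, hB₁col i₀] at hs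
    simp only [← Finset.mul_sum, ← Finset.sum_mul, hA₁col i₀] at hs
    simpa using hs
  -- second difference
  have hDD : (B₁ k₀ i₀ - B₁ k₀ j₀) * (B₂ l₀ a₀ - B₂ l₀ b₀)
      = α * ((A₁ k₀ i₀ - A₁ k₀ j₀) * (A₂ l₀ a₀ - A₂ l₀ b₀)) := by
    linear_combination hdiff1 k₀ i₀ j₀ l₀ a₀ - hdiff1 k₀ i₀ j₀ l₀ b₀
  have hx' : B₁ k₀ i₀ - B₁ k₀ j₀ ≠ 0 := sub_ne_zero.mpr hx
  have hy' : B₂ l₀ a₀ - B₂ l₀ b₀ ≠ 0 := sub_ne_zero.mpr hy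
  have hxy : (B₁ k₀ i₀ - B₁ k₀ j₀) * (B₂ l₀ a₀ - B₂ l₀ b₀) ≠ 0 := mul_ne_zero hx' hy'
  have hne : α * ((A₁ k₀ i₀ - A₁ k₀ j₀) * (A₂ l₀ a₀ - A₂ l₀ b₀)) ≠ 0 := hDD ▸ hxy
  have hα0 : α ≠ 0 := fun h => hne (by rw [h, zero_mul])
  have huv : (A₁ k₀ i₀ - A₁ k₀ j₀) * (A₂ l₀ a₀ - A₂ l₀ b₀) ≠ 0 :=
    fun h => hne (by rw [h, mul_zero])
  have hsq : α * (α * ((A₁ k₀ i₀ - A₁ k₀ j₀) * (A₂ l₀ a₀ - A₂ l₀ b₀)))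
      = α * ((A₁ k₀ i₀ - A₁ k₀ j₀) * (A₂ l₀ a₀ - A₂ l₀ b₀)) := by
    have h := hDD
    rw [hD1 k₀ i₀ j₀, hD2 l₀ a₀ b₀] at h
    linear_combination h
  have hα1 : α = 1 := by
    have h1 : α * α = α * 1 := by
      have := mul_right_cancel₀ huv (by linear_combination hsq :
        (α * α) * ((A₁ k₀ i₀ - A₁ k₀ j₀) * (A₂ l₀ a₀ - A₂ l₀ b₀))
          = α * ((A₁ k₀ i₀ - A₁ k₀ j₀) * (A₂ l₀ a₀ - A₂ l₀ b₀)))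
      rw [mul_one]; exact this
    exact mul_left_cancel₀ hα0 h1
  ext kl kl'
  have h := hα kl kl'
  rw [hα1] at h
  simpa [kroneckerMap_apply] using h
end

section
/- Let σ be a nonzero traceless Hermitian 2^n × 2^n complex matrix, and for i ∈ {1,2} let ρ_i = 2^{−n} I + α_i σ with α_i ∈ ℝ, where both ρ_1 and ρ_2 are positive semidefinite. Suppose Tr(ρ_1²) = Tr(ρ_2²), and suppose that for each i ∈ {1,2} there exists a unit vector v_i ∈ ℂ^{2^n} with v_i† ρ_i v_i > 2^{1−n}. Then ρ_1 = ρ_2. (In other words, knowledge of the purity together with the existence of an eigenvalue-type overlap exceeding 2^{1−n} uniquely determines the state among all states along a fixed traceless direction, fixing the gauge.) -/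
open Matrix ComplexOrder

/-- **Purity information fixes the gauge.** Two states along a fixed nonzero traceless
Hermitian direction with the same purity, each having a unit-vector overlap exceeding
`2^(1-n)`, must coincide. -/
theorem stmt_4 (n : ℕ) (σ : Matrix (Fin (2 ^ n)) (Fin (2 ^ n)) ℂ)
    (hσH : σ.IsHermitian) (hσtr : σ.trace = 0) (hσ0 : σ ≠ 0)
    (α₁ α₂ : ℝ)
    (ρ₁ ρ₂ : Matrix (Fin (2 ^ n)) (Fin (2 ^ n)) ℂ)
    (hρ₁ : ρ₁ = ((2 : ℂ) ^ n)⁻¹ • 1 + (α₁ : ℂ) • σ)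
    (hρ₂ : ρ₂ = ((2 : ℂ) ^ n)⁻¹ • 1 + (α₂ : ℂ) • σ)
    (h₁ : ρ₁.PosSemidef) (h₂ : ρ₂.PosSemidef)
    (hpur : (ρ₁ * ρ₁).trace = (ρ₂ * ρ₂).trace)
    (hv₁ : ∃ v : Fin (2 ^ n) → ℂ, star v ⬝ᵥ v = 1 ∧
      (2 : ℝ) / 2 ^ n < (star v ⬝ᵥ ρ₁.mulVec v).re)
    (hv₂ : ∃ v : Fin (2 ^ n) → ℂ, star v ⬝ᵥ v = 1 ∧
      (2 : ℝ) / 2 ^ n < (star v ⬝ᵥ ρ₂.mulVec v).re) :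
    ρ₁ = ρ₂ := by
  -- trace of σ² is a positive real, in particular nonzero
  have htr : (σ * σ).trace = ((∑ i, ∑ j, Complex.normSq (σ j i) : ℝ) : ℂ) := by
    have e : σ * σ = σᴴ * σ := by rw [hσH.eq]
    rw [e]
    simp only [Matrix.trace, Matrix.diag, Matrix.mul_apply, Matrix.conjTranspose_apply]
    push_cast
    refine Finset.sum_congr rfl fun i _ => Finset.sum_congr rfl fun j _ => ?_
    rw [Complex.normSq_eq_conj_mul_self]
    simp [RingHom.coe_comp]
  have ht0 : (σ * σ).trace ≠ 0 := by
    rw [htr]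
    intro h
    apply hσ0
    have h' : (∑ i, ∑ j, Complex.normSq (σ j i) : ℝ) = 0 := by exact_mod_cast h
    have hz : ∀ i ∈ (Finset.univ : Finset (Fin (2^n))), ∀ j ∈ (Finset.univ : Finset (Fin (2^n))),
        Complex.normSq (σ j i) = 0 := by
      have := (Finset.sum_eq_zero_iff_of_nonneg (fun i _ =>
        Finset.sum_nonneg fun j _ => Complex.normSq_nonneg _)).mp h'
      intro i hi j hj
      exact (Finset.sum_eq_zero_iff_of_nonneg (fun j _ => Complex.normSq_nonneg _)).mp
        (this i hi) j hj
    ext j i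
    simpa using Complex.normSq_eq_zero.mp (hz i (Finset.mem_univ i) j (Finset.mem_univ j))
  -- expand purity
  have exp : ∀ a : ℝ, (((((2 : ℂ) ^ n)⁻¹) • 1 + (a : ℂ) • σ) *
      ((((2 : ℂ) ^ n)⁻¹) • 1 + (a : ℂ) • σ)).trace
      = (((2 : ℂ) ^ n)⁻¹) ^ 2 * (2 : ℂ) ^ n + (a : ℂ) ^ 2 * (σ * σ).trace := by
    intro a
    simp [add_mul, mul_add, smul_smul, Matrix.trace_add, Matrix.trace_smul, hσtr,
      Matrix.trace_one, Fintype.card_fin, smul_eq_mul, Matrix.smul_mul, Matrix.mul_smul]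
    have h2 : ((2 : ℂ) ^ n) ≠ 0 := pow_ne_zero _ two_ne_zero
    field_simp
  rw [hρ₁, hρ₂, exp α₁, exp α₂] at hpur
  have hsq : (α₁ : ℂ) ^ 2 = (α₂ : ℂ) ^ 2 := by
    have h' : ((α₁ : ℂ) ^ 2 - (α₂ : ℂ) ^ 2) * (σ * σ).trace = 0 := by linear_combination hpur
    rcases mul_eq_zero.mp h' with h | h
    · exact sub_eq_zero.mp h
    · exact absurd h ht0
  have hsqR : α₁ ^ 2 = α₂ ^ 2 := by exact_mod_cast hsq
  rcases sq_eq_sq_iff_eq_or_eq_neg.mp hsqR with heq | hneg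
  · rw [hρ₁, hρ₂, heq]
  · -- α₁ = -α₂ : contradiction with the overlap bound
    obtain ⟨v, hv, hlt⟩ := hv₁
    have hsum : star v ⬝ᵥ ρ₁.mulVec v + star v ⬝ᵥ ρ₂.mulVec v
        = 2 * ((2 : ℂ) ^ n)⁻¹ := by
      rw [← dotProduct_add, ← Matrix.add_mulVec, hρ₁, hρ₂, hneg]
      push_cast
      have : (((2 : ℂ) ^ n)⁻¹ • 1 + (-(α₂ : ℂ)) • σ) + (((2 : ℂ) ^ n)⁻¹ • 1 + (α₂ : ℂ) • σ)
          = (2 * ((2 : ℂ) ^ n)⁻¹) • (1 : Matrix (Fin (2 ^ n)) (Fin (2 ^ n)) ℂ) := by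
        rw [two_mul]; module
      rw [this, Matrix.smul_mulVec, Matrix.one_mulVec, dotProduct_smul, hv,
        smul_eq_mul, mul_one]
    have hre : (star v ⬝ᵥ ρ₁.mulVec v).re + (star v ⬝ᵥ ρ₂.mulVec v).re
        = (2 : ℝ) / 2 ^ n := by
      have := congrArg Complex.re hsum
      simp only [Complex.add_re] at this
      rw [this]
      have : (2 * ((2 : ℂ) ^ n)⁻¹) = (((2 : ℝ) / 2 ^ n : ℝ) : ℂ) := by push_cast; ring
      rw [this, Complex.ofReal_re]
    have hnn : 0 ≤ (star v ⬝ᵥ ρ₂.mulVec v).re := by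
      have := h₂.dotProduct_mulVec_nonneg v
      exact (Complex.le_def.mp this).1
    linarith
end

section
/- Let P be a nonidentity Pauli string on n qubits. Then for every 2^n × 2^n complex matrix M: (2/4^n) Σ_{Q} Q M Q = (Tr(M)/2^n) I + (Tr(P M)/2^n) P, where the sum runs over all Pauli strings Q on n qubits that commute with P (i.e. Q P = P Q). In particular, this operator fixes I and P and annihilates every other Pauli string. -/
open Matrix

/-- The four single-qubit Pauli matrices `I, X, Y, Z`. -/
def pauli : Fin 4 → Matrix (Fin 2) (Fin 2) ℂ
  | 0 => 1
  | 1 => !![0, 1; 1, 0]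
  | 2 => !![0, -Complex.I; Complex.I, 0]
  | 3 => !![1, 0; 0, -1]

/-- The Pauli string `⊗_k σ_{f k}` on `n` qubits, as a matrix indexed by bitstrings. -/
noncomputable def pauliString (n : ℕ) (f : Fin n → Fin 4) :
    Matrix (Fin n → Fin 2) (Fin n → Fin 2) ℂ :=
  Matrix.of fun i j => ∏ k, pauli (f k) (i k) (j k)

/-! ### Auxiliary single-qubit algebra -/

def pmul : Fin 4 → Fin 4 → Fin 4 :=
  ![![0,1,2,3], ![1,0,3,2], ![2,3,0,1], ![3,2,1,0]]

def pc : Fin 4 → Fin 4 → ℂ :=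
  ![![1,1,1,1], ![1,1,Complex.I,-Complex.I], ![1,-Complex.I,1,Complex.I], ![1,Complex.I,-Complex.I,1]]

def ps (a b : Fin 4) : ℂ := if a = 0 ∨ b = 0 ∨ a = b then 1 else -1

theorem pauli_mul (a b : Fin 4) : pauli a * pauli b = pc a b • pauli (pmul a b) := by
  fin_cases a <;> fin_cases b <;>
    simp [pauli, pc, pmul, Matrix.vecHead, Matrix.vecTail] <;>
    · ext i j
      fin_cases i <;> fin_cases j <;>
        simp [Matrix.mul_apply, Fin.sum_univ_two, Complex.ext_iff]

theorem pauli_mul_apply (a b : Fin 4) (i j : Fin 2) :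
    ∑ t : Fin 2, pauli a i t * pauli b t j = pc a b * pauli (pmul a b) i j := by
  have h := congrFun (congrFun (pauli_mul a b) i) j
  simpa [Matrix.mul_apply] using h

theorem pmul_self : ∀ a : Fin 4, pmul a a = 0 := by decide
theorem pmul_pmul_left : ∀ a b : Fin 4, pmul (pmul a b) a = b := by decide
theorem pmul_eq_zero_iff : ∀ a b : Fin 4, (pmul a b = 0 ↔ a = b) := by decide
theorem pmul_comm : ∀ a b : Fin 4, pmul a b = pmul b a := by decide

theorem pc_self (a : Fin 4) : pc a a = 1 := by
  fin_cases a <;> norm_num [pc, Matrix.vecHead, Matrix.vecTail]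

theorem pc_ne_zero (a b : Fin 4) : pc a b ≠ 0 := by
  fin_cases a <;> fin_cases b <;> simp [pc, Matrix.vecHead, Matrix.vecTail, Complex.I_ne_zero]

theorem pc_conj (a b : Fin 4) : pc a b * pc (pmul a b) a = ps a b := by
  fin_cases a <;> fin_cases b <;>
    simp [pc, pmul, ps, Matrix.vecHead, Matrix.vecTail, Complex.I_mul_I]

theorem pc_swap (a b : Fin 4) : pc a b = ps a b * pc b a := by
  fin_cases a <;> fin_cases b <;>
    simp (config := { decide := true }) [pc, ps, Matrix.vecHead, Matrix.vecTail]

theorem ps_mul (a b c : Fin 4) : ps a b * ps a c = ps a (pmul b c) := by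
  fin_cases a <;> fin_cases b <;> fin_cases c <;>
    norm_num (config := { decide := true }) [ps, pmul, Matrix.vecHead, Matrix.vecTail]

theorem ps_sq (a b : Fin 4) : ps a b * ps a b = 1 := by
  unfold ps; split <;> norm_num

theorem sum_ps (b : Fin 4) : ∑ a : Fin 4, ps a b = if b = 0 then 4 else 0 := by
  fin_cases b <;>
    norm_num (config := { decide := true }) [ps, Fin.sum_univ_four]

theorem pauli_sum_key (a b c d : Fin 2) :
    ∑ s : Fin 4, pauli s a b * pauli s c d
      = 2 * ((if a = d then 1 else 0) * (if b = c then 1 else 0)) := by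
  fin_cases a <;> fin_cases b <;> fin_cases c <;> fin_cases d <;>
    norm_num [pauli, Fin.sum_univ_four, Complex.ext_iff]

/-! ### Pauli string algebra -/

theorem pauliString_mul (n : ℕ) (g h : Fin n → Fin 4) :
    pauliString n g * pauliString n h
      = (∏ k, pc (g k) (h k)) • pauliString n (fun k => pmul (g k) (h k)) := by
  ext i j
  simp only [Matrix.mul_apply, pauliString, Matrix.of_apply, Matrix.smul_apply, smul_eq_mul]
  calc ∑ a : Fin n → Fin 2, (∏ k, pauli (g k) (i k) (a k)) * ∏ k, pauli (h k) (a k) (j k)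
      = ∑ a : Fin n → Fin 2, ∏ k, (pauli (g k) (i k) (a k) * pauli (h k) (a k) (j k)) := by
        simp_rw [Finset.prod_mul_distrib]
    _ = ∏ k, ∑ t : Fin 2, pauli (g k) (i k) t * pauli (h k) t (j k) :=
        (Fintype.prod_sum fun k t => pauli (g k) (i k) t * pauli (h k) t (j k)).symm
    _ = ∏ k, (pc (g k) (h k) * pauli (pmul (g k) (h k)) (i k) (j k)) :=
        Finset.prod_congr rfl fun k _ => pauli_mul_apply ..
    _ = _ := Finset.prod_mul_distrib

theorem pauliString_zero (n : ℕ) : pauliString n (fun _ => 0) = 1 := by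
  ext i j
  show (∏ k, pauli 0 (i k) (j k)) = (1 : Matrix _ _ ℂ) i j
  simp only [pauli, Matrix.one_apply]
  rw [Finset.prod_boole]
  simp [funext_iff]

theorem pauliString_conj (n : ℕ) (g h : Fin n → Fin 4) :
    pauliString n g * pauliString n h * pauliString n g
      = (∏ k, ps (g k) (h k)) • pauliString n h := by
  rw [pauliString_mul, Matrix.smul_mul, pauliString_mul, smul_smul, ← Finset.prod_mul_distrib]
  simp only [pmul_pmul_left, pc_conj]

theorem pauliString_sq (n : ℕ) (g : Fin n → Fin 4) :
    pauliString n g * pauliString n g = 1 := by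
  rw [pauliString_mul]
  simp [pc_self, pmul_self, pauliString_zero]

theorem pauliString_ne_zero (n : ℕ) (g : Fin n → Fin 4) : pauliString n g ≠ 0 := by
  intro h
  have h2 := pauliString_sq n g
  rw [h, mul_zero] at h2
  have h3 := congrFun (congrFun h2 (fun _ => 0)) (fun _ => 0)
  simp [Matrix.one_apply] at h3

theorem smul_cancel {n : ℕ} {a b : ℂ} {P : Matrix (Fin n → Fin 2) (Fin n → Fin 2) ℂ}
    (hP : P ≠ 0) (h : a • P = b • P) : a = b := by
  have : (a - b) • P = 0 := by rw [sub_smul, h, sub_self]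
  rcases smul_eq_zero.mp this with h1 | h1
  · exact sub_eq_zero.mp h1
  · exact absurd h1 hP

theorem commute_iff (n : ℕ) (g f : Fin n → Fin 4) :
    (pauliString n g * pauliString n f = pauliString n f * pauliString n g)
      ↔ ∏ k, ps (g k) (f k) = 1 := by
  rw [pauliString_mul, pauliString_mul,
    show (fun k => pmul (f k) (g k)) = fun k => pmul (g k) (f k) from
      funext fun k => pmul_comm ..]
  have key : ∏ k, pc (g k) (f k) = (∏ k, ps (g k) (f k)) * ∏ k, pc (f k) (g k) := by
    rw [← Finset.prod_mul_distrib]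
    exact Finset.prod_congr rfl fun k _ => pc_swap ..
  have hne : (∏ k, pc (f k) (g k)) ≠ 0 :=
    Finset.prod_ne_zero_iff.mpr fun k _ => pc_ne_zero _ _
  constructor
  · intro h
    have hsc := smul_cancel (pauliString_ne_zero n _) h
    rw [key] at hsc
    have h1 : (∏ k, ps (g k) (f k)) * ∏ k, pc (f k) (g k)
        = 1 * ∏ k, pc (f k) (g k) := by rw [hsc, one_mul]
    exact mul_right_cancel₀ hne h1
  · intro h
    rw [key, h, one_mul]

theorem chi_pm (n : ℕ) (g f : Fin n → Fin 4) :
    (∏ k, ps (g k) (f k)) = 1 ∨ (∏ k, ps (g k) (f k)) = -1 := by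
  have : (∏ k, ps (g k) (f k)) * (∏ k, ps (g k) (f k)) = 1 := by
    rw [← Finset.prod_mul_distrib]
    rw [show (∏ k, ps (g k) (f k) * ps (g k) (f k)) = ∏ k : Fin n, (1:ℂ) from
      Finset.prod_congr rfl fun k _ => ps_sq ..]
    simp
  exact mul_self_eq_one_iff.mp this

theorem prod_ite_four {n : ℕ} (p : Fin n → Prop) [DecidablePred p] :
    ∏ k, (if p k then (4:ℂ) else 0) = if ∀ k, p k then (4:ℂ)^n else 0 := by
  rw [show (fun k => if p k then (4:ℂ) else 0)
        = fun k => 4 * (if p k then (1:ℂ) else 0) from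
      funext fun k => by split <;> ring]
  rw [Finset.prod_mul_distrib, Finset.prod_const, Finset.prod_boole]
  simp only [Finset.card_univ, Fintype.card_fin, Finset.mem_univ, forall_const]
  split <;> simp

theorem sum_chi (n : ℕ) (h : Fin n → Fin 4) :
    ∑ g : Fin n → Fin 4, ∏ k, ps (g k) (h k)
      = if h = (fun _ => 0) then (4:ℂ)^n else 0 := by
  rw [← Fintype.prod_sum fun k a => ps a (h k)]
  rw [show (∏ k, ∑ a : Fin 4, ps a (h k)) = ∏ k, if h k = 0 then (4:ℂ) else 0 from
    Finset.prod_congr rfl fun k _ => sum_ps _]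
  rw [prod_ite_four]
  simp [funext_iff]

theorem prod_delta {n : ℕ} (a j : Fin n → Fin 2) :
    ∏ k, (if a k = j k then (1:ℂ) else 0) = if a = j then 1 else 0 := by
  rw [Finset.prod_boole]
  simp [funext_iff]

open scoped Classical in
theorem key_sum (n : ℕ) (f h : Fin n → Fin 4) :
    ∑ g ∈ Finset.univ.filter (fun g : Fin n → Fin 4 => ∏ k, ps (g k) (f k) = 1),
        ∏ k, ps (g k) (h k)
      = (if h = (fun _ => 0) then (4:ℂ)^n/2 else 0) + (if h = f then (4:ℂ)^n/2 else 0) := by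
  have step : ∀ g : Fin n → Fin 4,
      (if ∏ k, ps (g k) (f k) = 1 then ∏ k, ps (g k) (h k) else 0)
        = (1/2) * ((∏ k, ps (g k) (h k)) + (∏ k, ps (g k) (h k)) * ∏ k, ps (g k) (f k)) := by
    intro g
    rcases chi_pm n g f with h1 | h1
    · rw [h1, if_pos rfl, mul_one]; ring
    · rw [h1, if_neg (by norm_num), mul_neg_one]; ring
  rw [Finset.sum_filter]
  rw [Finset.sum_congr rfl fun g _ => step g, ← Finset.mul_sum, Finset.sum_add_distrib]
  have prodmul : ∀ g : Fin n → Fin 4,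
      (∏ k, ps (g k) (h k)) * ∏ k, ps (g k) (f k)
        = ∏ k, ps (g k) (pmul (h k) (f k)) := by
    intro g
    rw [← Finset.prod_mul_distrib]
    exact Finset.prod_congr rfl fun k _ => ps_mul ..
  rw [Finset.sum_congr rfl fun g _ => prodmul g, sum_chi, sum_chi]
  have heq : ((fun k => pmul (h k) (f k)) = fun _ => 0) ↔ h = f := by
    simp [funext_iff, pmul_eq_zero_iff]
  simp only [heq]
  split_ifs <;> ring

theorem sum3_swap {A B H : Type*} [Fintype A] [Fintype B] [Fintype H]
    (F : H → A → B → ℂ) :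
    ∑ h : H, ∑ a : A, ∑ b : B, F h a b = ∑ a : A, ∑ b : B, ∑ h : H, F h a b := by
  rw [Finset.sum_comm]
  exact Finset.sum_congr rfl fun a _ => Finset.sum_comm

theorem reconstruct (n : ℕ) (M : Matrix (Fin n → Fin 2) (Fin n → Fin 2) ℂ) :
    M = ∑ h : Fin n → Fin 4,
        ((pauliString n h * M).trace / 2^n) • pauliString n h := by
  ext i j
  rw [Matrix.sum_apply]
  simp only [Matrix.smul_apply, smul_eq_mul, div_mul_eq_mul_div, ← Finset.sum_div]
  rw [eq_div_iff (pow_ne_zero n (two_ne_zero (α := ℂ)))]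
  have key : ∀ (a b : Fin n → Fin 2),
      ∑ h : Fin n → Fin 4, (∏ k, pauli (h k) (a k) (b k)) * ∏ k, pauli (h k) (i k) (j k)
        = 2^n * ((if a = j then (1:ℂ) else 0) * (if b = i then 1 else 0)) := by
    intro a b
    calc ∑ h : Fin n → Fin 4, (∏ k, pauli (h k) (a k) (b k)) * ∏ k, pauli (h k) (i k) (j k)
        = ∑ h : Fin n → Fin 4, ∏ k, (pauli (h k) (a k) (b k) * pauli (h k) (i k) (j k)) := by
          simp_rw [Finset.prod_mul_distrib]
      _ = ∏ k, ∑ s : Fin 4, pauli s (a k) (b k) * pauli s (i k) (j k) :=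
          (Fintype.prod_sum fun k s => pauli s (a k) (b k) * pauli s (i k) (j k)).symm
      _ = ∏ k, (2 * ((if a k = j k then (1:ℂ) else 0) * (if b k = i k then 1 else 0))) :=
          Finset.prod_congr rfl fun k _ => pauli_sum_key ..
      _ = 2^n * ((if a = j then (1:ℂ) else 0) * (if b = i then 1 else 0)) := by
          rw [Finset.prod_mul_distrib, Finset.prod_mul_distrib, Finset.prod_const,
            prod_delta, prod_delta]
          simp [Finset.card_univ]
  calc M i j * 2^n
      = ∑ a : Fin n → Fin 2, ∑ b : Fin n → Fin 2,
          M b a * (2^n * ((if a = j then (1:ℂ) else 0) * (if b = i then 1 else 0))) := by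
        simp only [mul_ite, mul_one, mul_zero, Finset.sum_ite_eq', Finset.mem_univ, if_true]
    _ = ∑ a : Fin n → Fin 2, ∑ b : Fin n → Fin 2,
          M b a * ∑ h : Fin n → Fin 4,
            (∏ k, pauli (h k) (a k) (b k)) * ∏ k, pauli (h k) (i k) (j k) := by
        refine Finset.sum_congr rfl fun a _ => Finset.sum_congr rfl fun b _ => ?_
        rw [key]
    _ = ∑ a : Fin n → Fin 2, ∑ b : Fin n → Fin 2, ∑ h : Fin n → Fin 4,
          M b a * ((∏ k, pauli (h k) (a k) (b k)) * ∏ k, pauli (h k) (i k) (j k)) := by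
        simp_rw [Finset.mul_sum]
    _ = ∑ h : Fin n → Fin 4, ∑ a : Fin n → Fin 2, ∑ b : Fin n → Fin 2,
          M b a * ((∏ k, pauli (h k) (a k) (b k)) * ∏ k, pauli (h k) (i k) (j k)) :=
        (sum3_swap _).symm
    _ = ∑ h : Fin n → Fin 4, ((pauliString n h * M).trace) * pauliString n h i j := by
        refine Finset.sum_congr rfl fun h _ => ?_
        simp only [Matrix.trace, Matrix.diag, Matrix.mul_apply, pauliString, Matrix.of_apply]
        simp_rw [Finset.sum_mul]
        exact Finset.sum_congr rfl fun a _ => Finset.sum_congr rfl fun b _ => by ring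

open scoped Classical in
/-- **Eliminator operators (Lemma 2 / twirling identity).** Averaging conjugation by
all Pauli strings commuting with a nonidentity Pauli string `P` projects onto the
span of `I` and `P`. -/
theorem stmt_5 (n : ℕ) (f : Fin n → Fin 4) (hf : f ≠ fun _ => 0)
    (M : Matrix (Fin n → Fin 2) (Fin n → Fin 2) ℂ) :
    ((2 : ℂ) / 4 ^ n) • ∑ g ∈ Finset.univ.filter
        (fun g : Fin n → Fin 4 =>
          pauliString n g * pauliString n f = pauliString n f * pauliString n g),
        pauliString n g * M * pauliString n g
      = (M.trace / 2 ^ n) • 1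
        + ((pauliString n f * M).trace / 2 ^ n) • pauliString n f := by
  have hfilter : Finset.univ.filter
        (fun g : Fin n → Fin 4 =>
          pauliString n g * pauliString n f = pauliString n f * pauliString n g)
      = Finset.univ.filter (fun g : Fin n → Fin 4 => ∏ k, ps (g k) (f k) = 1) :=
    Finset.filter_congr fun g _ => by rw [commute_iff]
  rw [hfilter]
  set c : (Fin n → Fin 4) → ℂ := fun h => (pauliString n h * M).trace / 2^n with hc
  conv_lhs => rw [reconstruct n M]
  have expand : ∀ g : Fin n → Fin 4,
      pauliString n g * (∑ h : Fin n → Fin 4, c h • pauliString n h) * pauliString n g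
        = ∑ h : Fin n → Fin 4, (c h * ∏ k, ps (g k) (h k)) • pauliString n h := by
    intro g
    rw [Finset.mul_sum, Finset.sum_mul]
    refine Finset.sum_congr rfl fun h _ => ?_
    rw [mul_smul_comm, smul_mul_assoc, pauliString_conj, smul_smul]
  rw [Finset.sum_congr rfl fun g _ => expand g]
  rw [Finset.sum_comm]
  have inner : ∀ h : Fin n → Fin 4,
      ∑ g ∈ Finset.univ.filter (fun g : Fin n → Fin 4 => ∏ k, ps (g k) (f k) = 1),
          (c h * ∏ k, ps (g k) (h k)) • pauliString n h
        = (c h * ((if h = (fun _ => 0) then (4:ℂ)^n/2 else 0)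
            + (if h = f then (4:ℂ)^n/2 else 0))) • pauliString n h := by
    intro h
    rw [← key_sum n f h, Finset.mul_sum]
    rw [← Finset.sum_smul]
  rw [Finset.sum_congr rfl fun h _ => inner h]
  rw [Finset.smul_sum]
  have h4 : ((4:ℂ)^n) ≠ 0 := pow_ne_zero n (by norm_num)
  have split : ∀ h : Fin n → Fin 4,
      ((2:ℂ)/4^n) • (c h * ((if h = (fun _ => 0) then (4:ℂ)^n/2 else 0)
          + (if h = f then (4:ℂ)^n/2 else 0))) • pauliString n h
        = (if h = (fun _ => 0) then c h • pauliString n h else 0)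
          + (if h = f then c h • pauliString n h else 0) := by
    intro h
    rw [smul_smul]
    by_cases h0 : h = (fun _ => 0) <;> by_cases hf2 : h = f
    · exact absurd (hf2.symm.trans h0) hf
    · rw [if_pos h0, if_neg hf2, if_pos h0, if_neg hf2, add_zero, add_zero]
      congr 1
      field_simp
    · rw [if_neg h0, if_pos hf2, if_neg h0, if_pos hf2, zero_add, zero_add]
      congr 1
      field_simp
    · rw [if_neg h0, if_neg hf2, if_neg h0, if_neg hf2]
      simp
  rw [Finset.sum_congr rfl fun h _ => split h, Finset.sum_add_distrib,
    Finset.sum_ite_eq' Finset.univ (fun _ => 0) (fun h => c h • pauliString n h),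
    Finset.sum_ite_eq' Finset.univ f (fun h => c h • pauliString n h)]
  simp only [Finset.mem_univ, if_true]
  rw [pauliString_zero]
  congr 2
  show ((pauliString n fun _ => 0) * M).trace / 2 ^ n = M.trace / 2 ^ n
  rw [pauliString_zero, one_mul]
end

section
/- Let b ∈ {0,1}^n with b ≠ 0 and let c ∈ {0,1}^n. Then 2^{1−n} Σ_{a ∈ {0,1}^n : a·b = 0} X^a Z^c X^a equals Z^c if c = 0 or c = b, and equals the zero matrix otherwise. -/
open Matrix

/-- The `n`-qubit bit-flip operator `X^a = ⊗_k X^{a_k}`, as a permutation matrix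
acting by XOR with the bitstring `a`. -/
def XPow (n : ℕ) (a : Fin n → Fin 2) :
    Matrix (Fin n → Fin 2) (Fin n → Fin 2) ℂ :=
  Matrix.of fun i j => if ∀ k, j k = i k + a k then 1 else 0

/-- The `n`-qubit phase operator `Z^c = ⊗_k Z^{c_k}`, the diagonal matrix with
entries `(-1)^{c·i}`. -/
def ZPowMat (n : ℕ) (c : Fin n → Fin 2) :
    Matrix (Fin n → Fin 2) (Fin n → Fin 2) ℂ :=
  Matrix.of fun i j => if i = j then (-1 : ℂ) ^ (∑ k, (c k : ℕ) * (i k : ℕ)) else 0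

lemma neg_one_pow_mod (m : ℕ) : ((-1:ℂ))^(m % 2) = (-1)^m := by
  conv_rhs => rw [← Nat.div_add_mod m 2]
  rw [pow_add, pow_mul]
  norm_num

lemma neg_one_pow_congr' {m l : ℕ} (h : m % 2 = l % 2) : ((-1:ℂ))^m = (-1)^l := by
  rw [← neg_one_pow_mod m, ← neg_one_pow_mod l, h]

lemma XPow_eq (n : ℕ) (a : Fin n → Fin 2) :
    XPow n a = Matrix.of fun i j => if j = i + a then (1:ℂ) else 0 := by
  ext i j
  simp [XPow, funext_iff]

lemma hflip {n : ℕ} (a p j : Fin n → Fin 2) : (j = p + a ↔ p = j + a) := by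
  have h2 : ∀ x y z : Fin 2, (x = y + z ↔ y = x + z) := by decide
  rw [funext_iff, funext_iff]
  exact forall_congr' fun k => h2 _ _ _

lemma XPow_mul {n : ℕ} (a : Fin n → Fin 2) (M : Matrix (Fin n → Fin 2) (Fin n → Fin 2) ℂ) :
    XPow n a * M = Matrix.of fun i j => M (i + a) j := by
  ext i j
  rw [XPow_eq]
  simp [Matrix.mul_apply, ite_mul, Finset.sum_ite_eq]

lemma mul_XPow {n : ℕ} (a : Fin n → Fin 2) (M : Matrix (Fin n → Fin 2) (Fin n → Fin 2) ℂ) :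
    M * XPow n a = Matrix.of fun i j => M i (j + a) := by
  ext i j
  rw [XPow_eq]
  simp only [Matrix.mul_apply, Matrix.of_apply]
  have h : ∀ p, (if j = p + a then (1:ℂ) else 0) = if p = j + a then 1 else 0 :=
    fun p => by rw [if_congr (hflip a p j) rfl rfl]
  simp_rw [h]
  simp [mul_ite, Finset.sum_ite_eq']

lemma twirl (n : ℕ) (a c : Fin n → Fin 2) :
    XPow n a * ZPowMat n c * XPow n a
      = ((-1:ℂ)) ^ (∑ k, (c k : ℕ) * (a k : ℕ)) • ZPowMat n c := by
  rw [mul_XPow, XPow_mul]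
  ext i j
  simp only [Matrix.of_apply, ZPowMat, Matrix.smul_apply, smul_ite, smul_eq_mul, mul_zero]
  simp only [add_left_inj]
  by_cases hij : i = j
  · subst hij
    simp only [if_true, eq_self_iff_true]
    rw [← pow_add]
    apply neg_one_pow_congr'
    have hterm : ∀ x y z : Fin 2, ((x:ℕ) * ((y + z : Fin 2):ℕ)) % 2
        = ((x:ℕ)*(z:ℕ) + (x:ℕ)*(y:ℕ)) % 2 := by decide
    rw [← Finset.sum_add_distrib]
    conv_lhs => rw [Finset.sum_nat_mod]
    conv_rhs => rw [Finset.sum_nat_mod]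
    congr 1
    refine Finset.sum_congr rfl fun k _ => ?_
    simpa [Pi.add_apply] using hterm (c k) (i k) (a k)
  · simp [hij]

lemma sum_pow (n : ℕ) (d : Fin n → ℕ) :
    ∑ a : Fin n → Fin 2, ((-1:ℂ)) ^ (∑ k, d k * (a k : ℕ))
      = ∏ k, (1 + (-1:ℂ)^(d k)) := by
  have h1 : ∀ a : Fin n → Fin 2, ((-1:ℂ))^(∑ k, d k * (a k:ℕ))
      = ∏ k, (-1:ℂ)^(d k * (a k:ℕ)) :=
    fun a => (Finset.prod_pow_eq_pow_sum _ _ _).symm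
  simp_rw [h1]
  have h2 : ∀ k : Fin n, (1 + (-1:ℂ)^(d k)) = ∑ v : Fin 2, (-1:ℂ)^(d k * (v:ℕ)) := by
    intro k
    rw [Fin.sum_univ_two]
    norm_num
  simp_rw [h2]
  rw [Finset.prod_univ_sum, Fintype.piFinset_univ]

lemma dot_zero_iff (n : ℕ) (a b : Fin n → Fin 2) :
    (∑ k, a k * b k = (0 : Fin 2)) ↔ (∑ k, (a k:ℕ) * (b k:ℕ)) % 2 = 0 := by
  have h : (∑ k, a k * b k : Fin 2) = (@Nat.cast (ZMod 2) _ (∑ k, (a k:ℕ) * (b k:ℕ)) : Fin 2) := by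
    rw [Nat.cast_sum]
    exact Finset.sum_congr rfl fun k _ => by
      rw [Nat.cast_mul]
      exact congrArg₂ (· * ·) (ZMod.natCast_zmod_val (n := 2) (a k)).symm (ZMod.natCast_zmod_val (n := 2) (b k)).symm
  rw [h]
  exact (ZMod.natCast_eq_zero_iff _ 2).trans Nat.dvd_iff_mod_eq_zero

lemma prod_c (n : ℕ) (c : Fin n → Fin 2) :
    ∏ k, (1 + (-1:ℂ)^((c k:ℕ))) = if c = (fun _ => 0) then 2^n else 0 := by
  by_cases hc : c = fun _ => 0
  · subst hc
    simp
    norm_num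
  · rw [if_neg hc]
    rw [funext_iff] at hc
    push_neg at hc
    obtain ⟨k, hk⟩ := hc
    refine Finset.prod_eq_zero (Finset.mem_univ k) ?_
    have h1 : (c k : ℕ) = 1 := by
      have := (c k).isLt
      have : (c k).val ≠ 0 := fun h => hk (Fin.ext h)
      omega
    rw [h1]
    ring

lemma prod_bc (n : ℕ) (b c : Fin n → Fin 2) :
    ∏ k, (1 + (-1:ℂ)^((b k:ℕ)+(c k:ℕ))) = if c = b then 2^n else 0 := by
  by_cases hc : c = b
  · subst hc
    rw [if_pos rfl]
    have h : ∀ k : Fin n, (1 + (-1:ℂ)^((c k:ℕ)+(c k:ℕ))) = 2 := by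
      intro k
      rw [show (c k:ℕ)+(c k:ℕ) = 2 * (c k:ℕ) by ring, pow_mul]
      norm_num
    simp [h]
    norm_num
  · rw [if_neg hc]
    rw [funext_iff] at hc
    push_neg at hc
    obtain ⟨k, hk⟩ := hc
    refine Finset.prod_eq_zero (Finset.mem_univ k) ?_
    have h1 : (b k : ℕ) + (c k : ℕ) = 1 := by
      have := (c k).isLt
      have := (b k).isLt
      have : (c k).val ≠ (b k).val := fun h => hk (Fin.ext h)
      omega
    rw [h1]
    ring

lemma char_sum (n : ℕ) (b c : Fin n → Fin 2) (hb : b ≠ fun _ => 0) :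
    ∑ a ∈ Finset.univ.filter (fun a : Fin n → Fin 2 => ∑ k, a k * b k = 0),
        ((-1:ℂ)) ^ (∑ k, (c k:ℕ) * (a k:ℕ))
      = if c = (fun _ => 0) ∨ c = b then (2:ℂ)^n / 2 else 0 := by
  rw [Finset.sum_filter]
  have hterm : ∀ a : Fin n → Fin 2,
      (if (∑ k, a k * b k = 0) then ((-1:ℂ))^(∑ k, (c k:ℕ)*(a k:ℕ)) else 0)
      = (((-1:ℂ))^(∑ k, (c k:ℕ)*(a k:ℕ))
          + (-1:ℂ)^(∑ k, ((b k:ℕ)+(c k:ℕ))*(a k:ℕ)))/2 := by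
    intro a
    have hsplit : (∑ k, ((b k:ℕ)+(c k:ℕ))*(a k:ℕ))
        = (∑ k, (a k:ℕ)*(b k:ℕ)) + ∑ k, (c k:ℕ)*(a k:ℕ) := by
      rw [← Finset.sum_add_distrib]
      exact Finset.sum_congr rfl fun k _ => by ring
    rw [if_congr (dot_zero_iff n a b) rfl rfl, hsplit, pow_add]
    by_cases h : (∑ k, (a k:ℕ)*(b k:ℕ)) % 2 = 0
    · rw [if_pos h, ← neg_one_pow_mod (∑ k, (a k:ℕ)*(b k:ℕ)), h]
      ring
    · rw [if_neg h]
      have h1 : (∑ k, (a k:ℕ)*(b k:ℕ)) % 2 = 1 := by omega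
      rw [← neg_one_pow_mod (∑ k, (a k:ℕ)*(b k:ℕ)), h1]
      ring
  simp_rw [hterm]
  rw [← Finset.sum_div, Finset.sum_add_distrib]
  rw [sum_pow n (fun k => (c k:ℕ)), sum_pow n (fun k => (b k:ℕ)+(c k:ℕ))]
  rw [prod_c, prod_bc]
  by_cases hc0 : c = fun _ => 0
  · have hcb : c ≠ b := fun h => hb (by rw [← h, hc0])
    rw [if_pos (Or.inl hc0), if_pos hc0, if_neg hcb]
    ring
  · by_cases hcb : c = b
    · rw [if_pos (Or.inr hcb), if_neg hc0, if_pos hcb]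
      ring
    · rw [if_neg hc0, if_neg hcb, if_neg (by tauto : ¬((c = fun _ => 0) ∨ c = b))]
      ring


/-- **Twirling `Z^c` by the X-type strings orthogonal to `b`.** For `b ≠ 0`, the
average `2^{1-n} Σ_{a·b=0} X^a Z^c X^a` equals `Z^c` when `c = 0` or `c = b`, and
vanishes otherwise. -/
theorem stmt_9 (n : ℕ) (b : Fin n → Fin 2) (hb : b ≠ fun _ => 0) (c : Fin n → Fin 2) :
    ((2 : ℂ) / 2 ^ n) • ∑ a ∈ Finset.univ.filter
        (fun a : Fin n → Fin 2 => ∑ k, a k * b k = 0),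
        XPow n a * ZPowMat n c * XPow n a
      = if c = (fun _ => 0) ∨ c = b then ZPowMat n c else 0 := by

  rw [Finset.sum_congr rfl (fun a _ => twirl n a c), ← Finset.sum_smul,
    smul_smul, char_sum n b c hb]
  by_cases h : c = (fun _ => 0) ∨ c = b
  · rw [if_pos h, if_pos h]
    have h2 : (2:ℂ)/2^n * (2^n/2) = 1 := by
      have : (2:ℂ)^n ≠ 0 := pow_ne_zero n two_ne_zero
      field_simp
    rw [h2, one_smul]
  · rw [if_neg h, if_neg h, mul_zero, zero_smul]
end

section
/- Let (M_i)_{i=1}^{D} be a D-outcome POVM on n qubits with M_i ≠ 0 for every i, and suppose the ℂ-linear span of {M_1,…,M_D} inside the space of 2^n × 2^n complex matrices has dimension r. Then there exists an r × D real matrix p with nonnegative entries such that the matrices M'_j = Σ_{i=1}^{D} p_{ji} M_i (for j = 1,…,r) are positive semidefinite, satisfy Σ_{j=1}^{r} M'_j = I, and are linearly independent over ℂ. -/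
open Matrix ComplexOrder

/-- **Making a POVM linearly independent.** From a `D`-outcome POVM of nonzero
operators whose span has dimension `r`, one can build, via nonnegative recombination,
an `r`-outcome POVM which is linearly independent. -/
theorem stmt_12 (n D r : ℕ) (M : Fin D → Matrix (Fin (2 ^ n)) (Fin (2 ^ n)) ℂ)
    (hM : ∀ k, (M k).PosSemidef) (hMsum : ∑ k, M k = 1) (hM0 : ∀ i, M i ≠ 0)
    (hr : Module.finrank ℂ (Submodule.span ℂ (Set.range M)) = r) :
    ∃ p : Fin r → Fin D → ℝ,
      (∀ j i, 0 ≤ p j i) ∧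
      (∀ j, (∑ i, (p j i : ℂ) • M i).PosSemidef) ∧
      (∑ j, ∑ i, (p j i : ℂ) • M i) = 1 ∧
      LinearIndependent ℂ (fun j => ∑ i, (p j i : ℂ) • M i) := by
  classical
  -- The identity matrix is nonzero
  have hi0 : (0 : ℕ) < 2 ^ n := pow_pos two_pos n
  have hone : (1 : Matrix (Fin (2 ^ n)) (Fin (2 ^ n)) ℂ) ≠ 0 := by
    intro h
    have := congrFun (congrFun h ⟨0, hi0⟩) ⟨0, hi0⟩
    simp [Matrix.one_apply] at this
  -- Extract a linearly independent spanning subset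
  obtain ⟨s, hs_sub, hs_span, hs_li⟩ := exists_linearIndependent ℂ (Set.range M)
  have hs_fin : s.Finite := (Set.finite_range M).subset hs_sub
  haveI : Fintype s := hs_fin.fintype
  have hcard : Fintype.card s = r := by
    have h1 := finrank_span_set_eq_card (s := s) hs_li
    rw [hs_span, hr, Set.toFinset_card] at h1
    exact h1.symm
  set e : Fin r ≃ s := (Fintype.equivFinOfCardEq hcard).symm with he
  have hchoose : ∀ j : Fin r, ∃ i, M i = (e j : Matrix (Fin (2 ^ n)) (Fin (2 ^ n)) ℂ) :=
    fun j => hs_sub (e j).2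
  choose f hf using hchoose
  have hrange : Set.range (fun j => M (f j)) = s := by
    have : (fun j => M (f j)) = Subtype.val ∘ e := funext hf
    rw [this, Set.range_comp, Equiv.range_eq_univ, Set.image_univ, Subtype.range_coe]
  have hfinj : Function.Injective f := by
    intro a b hab
    have : (e a : Matrix (Fin (2 ^ n)) (Fin (2 ^ n)) ℂ) = e b := by
      rw [← hf a, ← hf b, hab]
    exact e.injective (Subtype.ext this)
  have hli : LinearIndependent ℂ (fun j => M (f j)) := by
    have : (fun j => M (f j)) = Subtype.val ∘ e := funext hf
    rw [this]
    exact hs_li.comp e e.injective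
  -- X is the leftover
  set X : Matrix (Fin (2 ^ n)) (Fin (2 ^ n)) ℂ := 1 - ∑ j, M (f j) with hX
  have hmemspan : ∀ i, M i ∈ Submodule.span ℂ s := fun i => by
    rw [hs_span]; exact Submodule.subset_span ⟨i, rfl⟩
  have hXmem : X ∈ Submodule.span ℂ (Set.range fun j => M (f j)) := by
    rw [hrange]
    refine Submodule.sub_mem _ ?_ ?_
    · rw [← hMsum]; exact Submodule.sum_mem _ fun i _ => hmemspan i
    · exact Submodule.sum_mem _ fun j _ => hmemspan (f j)
  obtain ⟨c, hc⟩ := (Submodule.mem_span_range_iff_exists_fun ℂ).mp hXmem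
  -- there is an index k where 1 + c k ≠ 0
  have hk : ∃ k : Fin r, 1 + c k ≠ 0 := by
    by_contra h
    push_neg at h
    have h1 : (1 : Matrix (Fin (2 ^ n)) (Fin (2 ^ n)) ℂ) = ∑ j, (1 + c j) • M (f j) := by
      have heq : ∑ j, (1 + c j) • M (f j) = ∑ j, M (f j) + ∑ j, c j • M (f j) := by
        rw [← Finset.sum_add_distrib]
        congr 1; funext j; rw [add_smul, one_smul]
      rw [heq, hc, hX]; abel
    apply hone
    rw [h1]
    apply Finset.sum_eq_zero
    intro j _
    rw [h j, zero_smul]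
  obtain ⟨k, hk⟩ := hk
  -- the image of f as a finset
  set T : Finset (Fin D) := Finset.univ.image f with hT
  have hTsum : ∑ i ∈ T, M i = ∑ j, M (f j) :=
    Finset.sum_image (fun x _ y _ h => hfinj h)
  -- X equals the sum over the complement of T
  have hXc : ∑ i ∈ Tᶜ, M i = X := by
    have h2 := Finset.sum_add_sum_compl T M
    rw [hTsum, hMsum] at h2
    rw [hX, ← h2]; abel
  -- the key computation: the recombined matrices
  have hMp : ∀ j, (∑ i, ((((if i = f j then (1:ℝ) else 0) +
      (if j = k ∧ i ∉ T then 1 else 0)) : ℝ) : ℂ) • M i) =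
      M (f j) + (if j = k then X else 0) := by
    intro j
    have hcast : ∀ i : Fin D, ((((if i = f j then (1:ℝ) else 0) +
        (if j = k ∧ i ∉ T then 1 else 0)) : ℝ) : ℂ) =
        (if i = f j then (1:ℂ) else 0) + (if j = k ∧ i ∉ T then 1 else 0) := by
      intro i; push_cast; split_ifs <;> norm_num
    calc ∑ i, ((((if i = f j then (1:ℝ) else 0) +
          (if j = k ∧ i ∉ T then 1 else 0)) : ℝ) : ℂ) • M i
        = ∑ i, ((if i = f j then M i else 0) +
            (if j = k ∧ i ∉ T then M i else 0)) := by
          apply Finset.sum_congr rfl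
          intro i _
          rw [hcast i, add_smul]
          split_ifs <;> simp
      _ = (∑ i, if i = f j then M i else 0) +
            (∑ i, if j = k ∧ i ∉ T then M i else 0) := Finset.sum_add_distrib
      _ = M (f j) + (if j = k then X else 0) := by
          congr 1
          · simp [Finset.sum_ite_eq']
          · by_cases hjk : j = k
            · simp only [hjk, true_and, if_true]
              rw [← hXc, ← Finset.sum_filter]
              congr 1
              ext i
              simp [Finset.mem_compl]
            · simp [hjk]
  refine ⟨fun j i => (if i = f j then 1 else 0) + (if j = k ∧ i ∉ T then 1 else 0),
    ?_, ?_, ?_, ?_⟩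
  · intro j i
    dsimp only
    split_ifs <;> norm_num
  · intro j
    dsimp only
    rw [hMp j]
    by_cases hjk : j = k
    · rw [if_pos hjk, ← hXc]
      exact (hM (f j)).add (Finset.sum_induction _ _ (fun a b ha hb => ha.add hb)
        Matrix.PosSemidef.zero (fun i _ => hM i))
    · rw [if_neg hjk, add_zero]; exact hM (f j)
  · have h2 : ∑ j, (M (f j) + (if j = k then X else 0)) = 1 := by
      rw [Finset.sum_add_distrib, Finset.sum_ite_eq' Finset.univ k (fun _ => X),
        if_pos (Finset.mem_univ k), hX]
      abel
    rw [← h2]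
    exact Finset.sum_congr rfl fun j _ => hMp j
  · have heq : (fun j => ∑ i, ((((if i = f j then (1:ℝ) else 0) +
        (if j = k ∧ i ∉ T then 1 else 0)) : ℝ) : ℂ) • M i) =
        fun j => M (f j) + (if j = k then X else 0) := funext hMp
    rw [heq, Fintype.linearIndependent_iff]
    intro g hg
    have h2 : ∑ l, g l • (M (f l) + (if l = k then X else 0)) =
        ∑ l, g l • M (f l) + g k • X := by
      have h3 : ∀ l : Fin r, g l • (M (f l) + (if l = k then X else 0)) =
          g l • M (f l) + (if l = k then g l • X else 0) := by
        intro l; rw [smul_add]; congr 1; split_ifs <;> simp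
      simp only [h3]
      rw [Finset.sum_add_distrib, Finset.sum_ite_eq' Finset.univ k (fun l => g l • X),
        if_pos (Finset.mem_univ k)]
    have hexp : ∑ l, (g l + g k * c l) • M (f l) = 0 := by
      have h1 : ∑ l, (g l + g k * c l) • M (f l) =
          ∑ l, g l • M (f l) + g k • ∑ l, c l • M (f l) := by
        rw [Finset.smul_sum, ← Finset.sum_add_distrib]
        exact Finset.sum_congr rfl fun l _ => by rw [add_smul, smul_smul]
      rw [h1, hc, ← h2]
      exact hg
    have hall := Fintype.linearIndependent_iff.mp hli _ hexp
    have hgk : g k = 0 := by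
      have h4 : g k * (1 + c k) = 0 := by linear_combination hall k
      rcases mul_eq_zero.mp h4 with h5 | h5
      · exact h5
      · exact absurd h5 hk
    intro l
    have := hall l
    rwa [hgk, zero_mul, add_zero] at this
end
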